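/- arXiv:1809.10191 — 2 statements merged into one kernel-verified Lean document; each statement's English description precedes it below -/
import Mathlib

section
/- The ring of invariants ℂ[x_0,…,x_N]^G, i.e. the subalgebra of polynomials fixed by every element of G, equals the discrete LS algebra A over (S, ≤, b). In particular the discrete LS algebra over a totally ordered set with bonds is the ring of invariants of a finite abelian subgroup of GL_{N+1}(ℂ) acting linearly on a polynomial ring. -/
open Finset MvPolynomial

/-- `Mf b i` is `M_i = lcm(b_{i-1}, b_i)`, with the convention `b_{-1} = 1`
(the convention `b_N = 1` is imposed as a hypothesis in the statements). -/
def Mf (b : ℕ → ℕ) (i : ℕ) : ℕ := Nat.lcm (if i = 0 then 1 else b (i - 1)) (b i)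

/-- An LS-path of degree `r` over the totally ordered set `{0, …, N}` with bonds `b`:
a function `π : {0,…,N} → ℚ` (modelled as `π : ℕ → ℚ` vanishing above `N`) with
nonnegative values, integrality `b_j·(π 0 + ⋯ + π j) ∈ ℤ` for all `0 ≤ j ≤ N-1`,
and total sum `π 0 + ⋯ + π N = r`. -/
def IsLSPath (N : ℕ) (b : ℕ → ℕ) (r : ℕ) (π : ℕ → ℚ) : Prop :=
  (∀ i, 0 ≤ π i) ∧ (∀ i, N < i → π i = 0) ∧
  (∀ j < N, ∃ k : ℤ, (b j : ℚ) * (∑ i ∈ Finset.range (j + 1), π i) = k) ∧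
  (∑ i ∈ Finset.range (N + 1), π i = r)

/-- `SuppLE π π'` says `max supp π ≤ min supp π'`:
every element of the support of `π` is `≤` every element of the support of `π'`. -/
def SuppLE (π π' : ℕ → ℚ) : Prop := ∀ i j, π i ≠ 0 → π' j ≠ 0 → i ≤ j

/-- The monomial `x^π = ∏_{i=0}^{N} x_i ^ (M_i · π i)` in `ℂ[x_0,…,x_N]`
(the exponents `M_i · π i` are nonnegative integers for an LS-path `π`). -/
noncomputable def xpow (N : ℕ) (b : ℕ → ℕ) (π : ℕ → ℚ) :
    MvPolynomial (Fin (N + 1)) ℂ :=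
  MvPolynomial.monomial
    (Finsupp.equivFunOnFinite.symm fun i : Fin (N + 1) => ⌊(Mf b i : ℚ) * π i⌋₊) (1 : ℂ)

/-- The discrete LS algebra over `(S, ≤, b)`: the `ℂ`-linear span in `ℂ[x_0,…,x_N]`
of the monomials `x^π`, with `π` ranging over all LS-paths of all degrees. -/
noncomputable def discreteLS (N : ℕ) (b : ℕ → ℕ) :
    Submodule ℂ (MvPolynomial (Fin (N + 1)) ℂ) :=
  Submodule.span ℂ {p | ∃ r π, IsLSPath N b r π ∧ p = xpow N b π}

/-- The degree-`r` graded component `A_r = span_ℂ {x^π : π an LS-path of degree r}`. -/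
noncomputable def discreteLSdeg (N : ℕ) (b : ℕ → ℕ) (r : ℕ) :
    Submodule ℂ (MvPolynomial (Fin (N + 1)) ℂ) :=
  Submodule.span ℂ {p | ∃ π, IsLSPath N b r π ∧ p = xpow N b π}

/-- The diagonal matrix `e_i = diag(ζ^{(M/M_0)b_i}, …, ζ^{(M/M_i)b_i}, 1, …, 1)`
in `GL_{N+1}(ℂ)`, where `M = lcm(b_0, …, b_{N-1})`. -/
noncomputable def eMat (N : ℕ) (b : ℕ → ℕ) (ζ : ℂ) (i : ℕ) :
    Matrix (Fin (N + 1)) (Fin (N + 1)) ℂ :=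
  Matrix.diagonal fun j : Fin (N + 1) =>
    if (j : ℕ) ≤ i then ζ ^ ((Finset.range N).lcm b / Mf b (j : ℕ) * b i) else 1

/-- The subgroup `G` of `GL_{N+1}(ℂ)` generated by `e_0, e_1, …, e_N`. -/
noncomputable def Ggrp (N : ℕ) (b : ℕ → ℕ) (ζ : ℂ) :
    Subgroup (Matrix (Fin (N + 1)) (Fin (N + 1)) ℂ)ˣ :=
  Subgroup.closure
    {u | ∃ i ≤ N, (u : Matrix (Fin (N + 1)) (Fin (N + 1)) ℂ) = eMat N b ζ i}

/-- The linear action of a matrix `g` on `ℂ[x_0,…,x_N]`: a diagonal matrix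
`diag(d_0,…,d_N)` acts as the `ℂ`-algebra automorphism sending `x_j` to `d_j · x_j`. -/
noncomputable def matAct (N : ℕ) (g : Matrix (Fin (N + 1)) (Fin (N + 1)) ℂ) :
    MvPolynomial (Fin (N + 1)) ℂ →ₐ[ℂ] MvPolynomial (Fin (N + 1)) ℂ :=
  MvPolynomial.aeval fun j : Fin (N + 1) =>
    ∑ k : Fin (N + 1), MvPolynomial.C (g j k) * MvPolynomial.X k

/- AUX SECTION -/
section Aux

lemma cut_sum {M' : Type*} [AddCommMonoid M'] {i N : ℕ} (hi : i ≤ N) (f : ℕ → M') :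
    ∑ t ∈ range (N+1), (if t ≤ i then f t else 0) = ∑ t ∈ range (i+1), f t := by
  rw [← Finset.sum_subset (Finset.range_subset_range.mpr (by omega : i+1 ≤ N+1))
    (fun t ht hnt => if_neg (by simp only [Finset.mem_range] at *; omega))]
  exact Finset.sum_congr rfl fun t ht => if_pos (by simp only [Finset.mem_range] at ht; omega)

lemma M_pos (N : ℕ) (b : ℕ → ℕ) (hN : 1 ≤ N) (hb : ∀ i < N, 0 < b i) :
    0 < (Finset.range N).lcm b := by
  rw [Nat.pos_iff_ne_zero, Ne, Finset.lcm_eq_zero_iff]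
  intro h
  simp only [Set.mem_image, Finset.mem_coe, Finset.mem_range] at h
  obtain ⟨i, hi, h0⟩ := h
  exact (hb i hi).ne' h0

lemma Mf_pos (N : ℕ) (b : ℕ → ℕ) (hb : ∀ i < N, 0 < b i) (hbN : b N = 1) {j : ℕ} (hj : j ≤ N) :
    0 < Mf b j := by
  have h2 : 0 < b j := by
    rcases eq_or_lt_of_le hj with h | h
    · simp [h, hbN]
    · exact hb j h
  have h1 : 0 < (if j = 0 then 1 else b (j - 1)) := by
    split
    · norm_num
    · exact hb (j-1) (by omega)
  exact Nat.lcm_pos h1 h2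

lemma Mf_dvd (N : ℕ) (b : ℕ → ℕ) (hN : 1 ≤ N) (hbN : b N = 1) {j : ℕ} (hj : j ≤ N) :
    Mf b j ∣ (Finset.range N).lcm b := by
  apply Nat.lcm_dvd
  · split
    · exact one_dvd _
    · exact Finset.dvd_lcm (Finset.mem_range.mpr (by omega))
  · rcases eq_or_lt_of_le hj with h | h
    · rw [h, hbN]; exact one_dvd _
    · exact Finset.dvd_lcm (Finset.mem_range.mpr h)

lemma matAct_X (N : ℕ) (g : Matrix (Fin (N + 1)) (Fin (N + 1)) ℂ) (j : Fin (N+1)) :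
    matAct N g (X j) = ∑ k : Fin (N + 1), C (g j k) * X k := by
  simp [matAct]

lemma matAct_mul (N : ℕ) (g h : Matrix (Fin (N + 1)) (Fin (N + 1)) ℂ) :
    matAct N (g * h) = (matAct N h).comp (matAct N g) := by
  apply MvPolynomial.algHom_ext
  intro j
  simp only [AlgHom.comp_apply, matAct_X, map_sum, map_mul, aeval_C]
  simp only [matAct, aeval_C, aeval_X, Matrix.mul_apply, ← MvPolynomial.algebraMap_eq,
    Finset.mul_sum, map_sum]
  rw [Finset.sum_comm]
  apply Finset.sum_congr rfl
  intro k _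
  simp only [AlgHom.commutes, Finset.sum_mul, map_mul, mul_assoc]

lemma matAct_one (N : ℕ) : matAct N 1 = AlgHom.id ℂ _ := by
  apply MvPolynomial.algHom_ext
  intro j
  simp [matAct, Matrix.one_apply, ite_smul]

lemma matAct_diag (N : ℕ) (d : Fin (N+1) → ℂ) (a : Fin (N+1) →₀ ℕ) (c : ℂ) :
    matAct N (Matrix.diagonal d) (monomial a c) =
      monomial a (c * ∏ j, d j ^ a j) := by
  have hX : ∀ j : Fin (N+1), (∑ k : Fin (N+1),
      (C (Matrix.diagonal d j k) * X k : MvPolynomial (Fin (N+1)) ℂ)) = C (d j) * X j := by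
    intro j
    rw [Finset.sum_eq_single j]
    · simp [Matrix.diagonal]
    · intro k _ hk
      rw [Matrix.diagonal_apply_ne' _ hk]; simp
    · simp
  rw [matAct, aeval_monomial]
  simp only [hX]
  have : (a.prod fun n e => (C (d n) * X n) ^ e) =
      C (∏ j, d j ^ a j) * a.prod fun n e => (X n : MvPolynomial (Fin (N+1)) ℂ) ^ e := by
    rw [Finsupp.prod_fintype _ _ (fun i => pow_zero _),
      Finsupp.prod_fintype _ _ (fun i => pow_zero _)]
    simp only [mul_pow]
    rw [Finset.prod_mul_distrib, map_prod]
    simp [map_pow]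
  rw [this, monomial_eq]
  simp only [algebraMap_eq]
  rw [map_mul, mul_assoc]

noncomputable def fixSub (N : ℕ) (p : MvPolynomial (Fin (N + 1)) ℂ) :
    Subgroup (Matrix (Fin (N + 1)) (Fin (N + 1)) ℂ)ˣ where
  carrier := {u | matAct N (u : Matrix (Fin (N + 1)) (Fin (N + 1)) ℂ) p = p}
  one_mem' := by simp [matAct_one]
  mul_mem' := by
    intro u v hu hv
    simp only [Set.mem_setOf_eq] at *
    rw [Units.val_mul, matAct_mul, AlgHom.comp_apply, hu, hv]
  inv_mem' := by
    intro u hu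
    simp only [Set.mem_setOf_eq] at *
    conv_lhs => rw [← hu]
    rw [← AlgHom.comp_apply, ← matAct_mul, ← Units.val_mul, mul_inv_cancel, Units.val_one,
      matAct_one, AlgHom.id_apply]

lemma diag_fix_iff (N : ℕ) (d : Fin (N+1) → ℂ) (p : MvPolynomial (Fin (N + 1)) ℂ) :
    matAct N (Matrix.diagonal d) p = p ↔
      ∀ a ∈ p.support, ∏ j, d j ^ a j = 1 := by
  constructor
  · intro h a ha
    have := congrArg (coeff a) h
    rw [show p = ∑ v ∈ p.support, monomial v (coeff v p) from
      (p.support_sum_monomial_coeff).symm] at this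
    rw [map_sum] at this
    simp only [matAct_diag, coeff_sum, coeff_monomial] at this
    rw [Finset.sum_ite_eq' p.support a, Finset.sum_ite_eq' p.support a,
      if_pos ha, if_pos ha] at this
    have hca : coeff a p ≠ 0 := mem_support_iff.mp ha
    field_simp at this
    tauto
  · intro h
    conv_lhs => rw [show p = ∑ v ∈ p.support, monomial v (coeff v p) from
      (p.support_sum_monomial_coeff).symm]
    rw [map_sum]
    conv_rhs => rw [show p = ∑ v ∈ p.support, monomial v (coeff v p) from
      (p.support_sum_monomial_coeff).symm]
    apply Finset.sum_congr rfl
    intro a ha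
    rw [matAct_diag, h a ha, mul_one]

lemma path_exp_nat (N : ℕ) (b : ℕ → ℕ) (hN : 1 ≤ N) (hb : ∀ i < N, 0 < b i) (hbN : b N = 1)
    {r : ℕ} {π : ℕ → ℚ} (hπ : IsLSPath N b r π) {j : ℕ} (hj : j ≤ N) :
    ∃ m : ℕ, (Mf b j : ℚ) * π j = m := by
  obtain ⟨hpos, hvan, hint, hsum⟩ := hπ
  set S : ℕ → ℚ := fun t => ∑ i ∈ Finset.range t, π i with hS
  have hint1 : ∀ t ≤ N, ∃ k : ℤ, (b t : ℚ) * S (t + 1) = k := by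
    intro t ht
    rcases eq_or_lt_of_le ht with h | h
    · exact ⟨r, by rw [h, hbN, hS]; simp [hsum]⟩
    · exact hint t h
  set b' : ℕ := if j = 0 then 1 else b (j - 1) with hb'
  have hint2 : ∃ k : ℤ, (b' : ℚ) * S j = k := by
    rcases Nat.eq_zero_or_pos j with h | h
    · exact ⟨0, by simp [h, hS]⟩
    · rw [hb', if_neg (by omega)]
      obtain ⟨k, hk⟩ := hint1 (j - 1) (by omega)
      exact ⟨k, by rwa [show j - 1 + 1 = j by omega] at hk⟩
  obtain ⟨k, hk⟩ := hint1 j hj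
  obtain ⟨k', hk'⟩ := hint2
  have hπj : π j = S (j + 1) - S j := by simp [hS, Finset.sum_range_succ]
  have hd1 : (Mf b j / b j) * b j = Mf b j := Nat.div_mul_cancel (Nat.dvd_lcm_right _ _)
  have hd2 : (Mf b j / b') * b' = Mf b j :=
    Nat.div_mul_cancel (by rw [hb']; exact Nat.dvd_lcm_left _ _)
  set z : ℤ := (Mf b j / b j : ℕ) * k - ((Mf b j / b' : ℕ) : ℤ) * k' with hz
  have c1 : ((Mf b j : ℕ) : ℚ) = ((Mf b j / b j : ℕ) : ℚ) * (b j : ℚ) := by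
    rw [← Nat.cast_mul, hd1]
  have c2 : ((Mf b j : ℕ) : ℚ) = ((Mf b j / b' : ℕ) : ℚ) * (b' : ℚ) := by
    rw [← Nat.cast_mul, hd2]
  have key : (Mf b j : ℚ) * π j = (z : ℚ) := by
    have key0 : (Mf b j : ℚ) * π j =
        ((Mf b j / b j : ℕ) : ℚ) * (k : ℚ) - ((Mf b j / b' : ℕ) : ℚ) * (k' : ℚ) := by
      rw [hπj, mul_sub, ← hk, ← hk']
      nth_rewrite 2 [c2]
      rw [c1]
      ring
    rw [key0, hz, Int.cast_sub, Int.cast_mul, Int.cast_mul, Int.cast_natCast, Int.cast_natCast]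
  have hnn : (0 : ℚ) ≤ (Mf b j : ℚ) * π j := mul_nonneg (Nat.cast_nonneg _) (hpos j)
  have hznn : 0 ≤ z := by
    have : (0:ℚ) ≤ (z : ℚ) := by rw [← key]; exact hnn
    exact_mod_cast this
  exact ⟨z.toNat, by rw [key]; exact_mod_cast (Int.toNat_of_nonneg hznn).symm⟩

def InvExpR (N : ℕ) (b : ℕ → ℕ) (a : ℕ → ℕ) : Prop :=
  ∀ i ≤ N, ((Finset.range N).lcm b) ∣
    ∑ t ∈ Finset.range (N+1), if t ≤ i then (Finset.range N).lcm b / Mf b t * b i * a t else 0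

lemma Esum (N : ℕ) (b : ℕ → ℕ) (hN : 1 ≤ N) (hbN : b N = 1) (a : ℕ → ℕ) (π : ℕ → ℚ)
    (ha : ∀ t ≤ N, (Mf b t : ℚ) * π t = a t) {i : ℕ} (hi : i ≤ N) :
    ((∑ t ∈ Finset.range (N+1),
        if t ≤ i then (Finset.range N).lcm b / Mf b t * b i * a t else 0 : ℕ) : ℚ)
      = (((Finset.range N).lcm b : ℕ) : ℚ) * ((b i : ℚ) * ∑ t ∈ Finset.range (i+1), π t) := by
  push_cast [apply_ite (Nat.cast : ℕ → ℚ)]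
  rw [cut_sum hi, Finset.mul_sum, Finset.mul_sum]
  apply Finset.sum_congr rfl
  intro t ht
  have ht' : t ≤ N := by simp only [Finset.mem_range] at ht; omega
  have hdd : (((Finset.range N).lcm b / Mf b t : ℕ) : ℚ) * ((Mf b t : ℕ) : ℚ)
      = (((Finset.range N).lcm b : ℕ) : ℚ) := by
    rw [← Nat.cast_mul, Nat.div_mul_cancel (Mf_dvd N b hN hbN ht')]
  rw [← ha t ht', ← hdd]
  ring

lemma invExpR_of_path (N : ℕ) (b : ℕ → ℕ) (hN : 1 ≤ N) (hbN : b N = 1)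
    {r : ℕ} {π : ℕ → ℚ} (hπ : IsLSPath N b r π) (a : ℕ → ℕ)
    (ha : ∀ t ≤ N, (Mf b t : ℚ) * π t = a t) : InvExpR N b a := by
  intro i hi
  obtain ⟨hpos, hvan, hint, hsum⟩ := hπ
  have hint1 : ∃ k : ℤ, (b i : ℚ) * ∑ t ∈ Finset.range (i+1), π t = k := by
    rcases eq_or_lt_of_le hi with h | h
    · exact ⟨r, by rw [h, hbN]; simp [hsum]⟩
    · exact hint i h
  obtain ⟨k, hk⟩ := hint1
  have hknn : 0 ≤ k := by
    have : (0:ℚ) ≤ (k:ℚ) := by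
      rw [← hk]
      exact mul_nonneg (Nat.cast_nonneg _) (Finset.sum_nonneg fun t _ => hpos t)
    exact_mod_cast this
  have hE := Esum N b hN hbN a π ha hi
  rw [hk] at hE
  refine ⟨k.toNat, ?_⟩
  have : ((∑ t ∈ Finset.range (N+1),
      if t ≤ i then (Finset.range N).lcm b / Mf b t * b i * a t else 0 : ℕ) : ℚ)
      = (((Finset.range N).lcm b * k.toNat : ℕ) : ℚ) := by
    rw [hE, ← Int.toNat_of_nonneg hknn]
    norm_cast
  exact_mod_cast this

lemma path_of_invExpR (N : ℕ) (b : ℕ → ℕ) (hN : 1 ≤ N) (hb : ∀ i < N, 0 < b i) (hbN : b N = 1)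
    (a : ℕ → ℕ) (h : InvExpR N b a) :
    ∃ r π, IsLSPath N b r π ∧ ∀ t ≤ N, (Mf b t : ℚ) * π t = a t := by
  set M := (Finset.range N).lcm b with hM
  have hMpos : 0 < M := M_pos N b hN hb
  set π : ℕ → ℚ := fun t => if t ≤ N then (a t : ℚ) / (Mf b t : ℚ) else 0 with hπdef
  have ha : ∀ t ≤ N, (Mf b t : ℚ) * π t = a t := by
    intro t ht
    have : (0:ℚ) < (Mf b t : ℚ) := by exact_mod_cast Mf_pos N b hb hbN ht
    rw [hπdef]
    simp only [if_pos ht]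
    field_simp
  have hE : ∀ i ≤ N, ∃ e : ℕ, (b i : ℚ) * ∑ t ∈ Finset.range (i+1), π t = e := by
    intro i hi
    obtain ⟨e, he⟩ := h i hi
    refine ⟨e, ?_⟩
    have h2 := Esum N b hN hbN a π ha hi
    rw [he] at h2
    push_cast at h2
    have hMQ : ((M:ℕ) : ℚ) ≠ 0 := by
      exact_mod_cast hMpos.ne'
    rw [← hM] at h2
    exact (mul_left_cancel₀ hMQ h2).symm
  obtain ⟨rr, hrr⟩ := hE N le_rfl
  rw [hbN] at hrr
  push_cast at hrr
  rw [one_mul] at hrr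
  refine ⟨rr, π, ⟨?_, ?_, ?_, hrr⟩, ha⟩
  · intro t
    by_cases ht : t ≤ N
    · simp only [hπdef, if_pos ht]
      positivity
    · simp [hπdef, ht]
  · intro t ht
    simp only [hπdef]
    rw [if_neg (by omega)]
  · intro j hj
    obtain ⟨e, he⟩ := hE j (le_of_lt hj)
    exact ⟨e, by exact_mod_cast he⟩

def resN (N : ℕ) (a : Fin (N+1) →₀ ℕ) : ℕ → ℕ := fun t => if h : t < N+1 then a ⟨t, h⟩ else 0

lemma prod_emat (N : ℕ) (b : ℕ → ℕ) (ζ : ℂ) (i : ℕ) (a : Fin (N+1) →₀ ℕ) :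
    (∏ j : Fin (N+1),
      (if (j:ℕ) ≤ i then ζ ^ ((Finset.range N).lcm b / Mf b (j:ℕ) * b i) else 1) ^ a j)
      = ζ ^ (∑ t ∈ Finset.range (N+1),
          if t ≤ i then (Finset.range N).lcm b / Mf b t * b i * resN N a t else 0) := by
  rw [← Fin.sum_univ_eq_sum_range
    (fun t => if t ≤ i then (Finset.range N).lcm b / Mf b t * b i * resN N a t else 0) (N+1)]
  rw [← Finset.prod_pow_eq_pow_sum]
  apply Finset.prod_congr rfl
  intro j _
  have hres : resN N a (j : ℕ) = a j := by
    simp only [resN, dif_pos j.isLt, Fin.eta]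
  rw [hres]
  split
  · rw [← pow_mul]
  · simp

noncomputable def rootsDiagSub (n M : ℕ) (hM : M ≠ 0) :
    Subgroup (Matrix (Fin n) (Fin n) ℂ)ˣ where
  carrier := {u | ∃ d : Fin n → ℂ, (∀ j, d j ^ M = 1) ∧
    (u : Matrix (Fin n) (Fin n) ℂ) = Matrix.diagonal d}
  one_mem' := ⟨1, fun j => one_pow M, by rw [Units.val_one]; exact Matrix.diagonal_one.symm⟩
  mul_mem' := by
    rintro u v ⟨d, hd, hu⟩ ⟨e, he, hv⟩
    exact ⟨d * e, fun j => by rw [Pi.mul_apply, mul_pow, hd, he, one_mul],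
      by rw [Units.val_mul, hu, hv, Matrix.diagonal_mul_diagonal]; rfl⟩
  inv_mem' := by
    rintro u ⟨d, hd, hu⟩
    have hdj : ∀ j, d j ≠ 0 := by
      intro j h0
      have := hd j
      rw [h0, zero_pow hM] at this
      exact zero_ne_one this
    refine ⟨fun j => (d j)⁻¹,
      fun j => by simp only []; rw [inv_pow, hd, inv_one], ?_⟩
    have h1 : (u : Matrix (Fin n) (Fin n) ℂ) * Matrix.diagonal (fun j => (d j)⁻¹) = 1 := by
      rw [hu, Matrix.diagonal_mul_diagonal,
        show (fun j => d j * (d j)⁻¹) = fun _ => (1:ℂ) from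
          funext fun j => mul_inv_cancel₀ (hdj j)]
      exact Matrix.diagonal_one
    calc (↑u⁻¹ : Matrix (Fin n) (Fin n) ℂ)
        = ↑u⁻¹ * ((u : Matrix (Fin n) (Fin n) ℂ) * Matrix.diagonal (fun j => (d j)⁻¹)) := by
          rw [h1, mul_one]
      _ = (↑u⁻¹ * (u : Matrix (Fin n) (Fin n) ℂ)) * Matrix.diagonal (fun j => (d j)⁻¹) := by
          rw [mul_assoc]
      _ = Matrix.diagonal (fun j => (d j)⁻¹) := by rw [Units.inv_mul, one_mul]

lemma rootsDiag_finite (n M : ℕ) (hM : M ≠ 0) :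
    ((rootsDiagSub n M hM : Set (Matrix (Fin n) (Fin n) ℂ)ˣ)).Finite := by
  have hroots : ({x : ℂ | x ^ M = 1}).Finite := by
    have : {x : ℂ | x ^ M = 1} ⊆ ((Polynomial.nthRoots M (1:ℂ)).toFinset : Set ℂ) := by
      intro x hx
      rw [Finset.mem_coe, Multiset.mem_toFinset,
        Polynomial.mem_nthRoots (Nat.pos_of_ne_zero hM)]
      exact hx
    exact Set.Finite.subset (Finset.finite_toSet _) this
  have hD : ({d : Fin n → ℂ | ∀ j, d j ^ M = 1}).Finite := by
    have : {d : Fin n → ℂ | ∀ j, d j ^ M = 1} ⊆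
        Set.pi Set.univ (fun _ => {x : ℂ | x ^ M = 1}) := by
      intro d hd j _
      exact hd j
    exact Set.Finite.subset (Set.Finite.pi (fun _ => hroots)) this
  have himg : ((Matrix.diagonal '' {d : Fin n → ℂ | ∀ j, d j ^ M = 1})).Finite := hD.image _
  apply Set.Finite.of_finite_image (f := Units.val)
  · apply himg.subset
    rintro x ⟨u, ⟨d, hd, hu⟩, rfl⟩
    exact ⟨d, hd, hu.symm⟩
  · exact Units.val_injective.injOn

lemma rootsDiag_comm (n M : ℕ) (hM : M ≠ 0) {u v : (Matrix (Fin n) (Fin n) ℂ)ˣ}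
    (hu : u ∈ rootsDiagSub n M hM) (hv : v ∈ rootsDiagSub n M hM) : u * v = v * u := by
  obtain ⟨d, _, hud⟩ := hu
  obtain ⟨e, _, hve⟩ := hv
  ext
  rw [Units.val_mul, Units.val_mul, hud, hve, Matrix.diagonal_mul_diagonal,
    Matrix.diagonal_mul_diagonal,
    show (fun i => d i * e i) = fun i => e i * d i from funext fun i => mul_comm _ _]

noncomputable def diagUnit {n : ℕ} (d : Fin n → ℂ) (hd : ∀ j, d j ≠ 0) :
    (Matrix (Fin n) (Fin n) ℂ)ˣ where
  val := Matrix.diagonal d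
  inv := Matrix.diagonal fun j => (d j)⁻¹
  val_inv := by
    rw [Matrix.diagonal_mul_diagonal,
      show (fun j => d j * (d j)⁻¹) = fun _ => (1:ℂ) from
        funext fun j => mul_inv_cancel₀ (hd j)]
    exact Matrix.diagonal_one
  inv_val := by
    rw [Matrix.diagonal_mul_diagonal,
      show (fun j => (d j)⁻¹ * d j) = fun _ => (1:ℂ) from
        funext fun j => inv_mul_cancel₀ (hd j)]
    exact Matrix.diagonal_one

end Aux

noncomputable def invMod (N : ℕ) (b : ℕ → ℕ) (ζ : ℂ) :
    Submodule ℂ (MvPolynomial (Fin (N+1)) ℂ) where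
  carrier := {p | ∀ i ≤ N, matAct N (eMat N b ζ i) p = p}
  zero_mem' := fun i hi => map_zero _
  add_mem' := by
    intro p q hp hq i hi
    rw [map_add, hp i hi, hq i hi]
  smul_mem' := by
    intro c p hp i hi
    rw [map_smul, hp i hi]

/-- The ring of invariants `ℂ[x_0,…,x_N]^G` equals the discrete LS algebra `A` over
`(S, ≤, b)`; moreover `G` is a finite abelian subgroup of `GL_{N+1}(ℂ)`, so the
discrete LS algebra is the ring of invariants of a finite abelian group acting
linearly on a polynomial ring. -/
theorem stmt11 (N : ℕ) (hN : 1 ≤ N) (b : ℕ → ℕ) (hb : ∀ i < N, 0 < b i) (hbN : b N = 1)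
    (ζ : ℂ) (hζ : IsPrimitiveRoot ζ ((Finset.range N).lcm b)) :
    {p : MvPolynomial (Fin (N + 1)) ℂ |
        ∀ u ∈ Ggrp N b ζ, matAct N (u : Matrix (Fin (N + 1)) (Fin (N + 1)) ℂ) p = p}
      = (discreteLS N b : Set (MvPolynomial (Fin (N + 1)) ℂ)) ∧
    ((Ggrp N b ζ : Set (Matrix (Fin (N + 1)) (Fin (N + 1)) ℂ)ˣ)).Finite ∧
    (∀ u ∈ Ggrp N b ζ, ∀ v ∈ Ggrp N b ζ, u * v = v * u) := by
  have hMpos : 0 < (Finset.range N).lcm b := M_pos N b hN hb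
  have hMne : (Finset.range N).lcm b ≠ 0 := hMpos.ne'
  have hGle : Ggrp N b ζ ≤ rootsDiagSub (N+1) ((Finset.range N).lcm b) hMne := by
    rw [Ggrp, Subgroup.closure_le]
    rintro u ⟨i, hi, hu⟩
    refine ⟨fun j : Fin (N+1) =>
      if (j:ℕ) ≤ i then ζ ^ ((Finset.range N).lcm b / Mf b (j:ℕ) * b i) else 1, ?_, hu⟩
    intro j
    simp only []
    split
    · rw [← pow_mul, mul_comm, pow_mul, hζ.pow_eq_one, one_pow]
    · exact one_pow _
  have hζ0 : ζ ≠ 0 := hζ.ne_zero hMne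
  have fixgen : ∀ p : MvPolynomial (Fin (N+1)) ℂ,
      (∀ u ∈ Ggrp N b ζ, matAct N (u : Matrix (Fin (N+1)) (Fin (N+1)) ℂ) p = p) ↔
      (∀ i ≤ N, matAct N (eMat N b ζ i) p = p) := by
    intro p
    constructor
    · intro h i hi
      have hd : ∀ j : Fin (N+1),
          (fun j : Fin (N+1) => if (j:ℕ) ≤ i then
            ζ ^ ((Finset.range N).lcm b / Mf b (j:ℕ) * b i) else 1) j ≠ 0 := by
        intro j
        simp only []
        split
        · exact pow_ne_zero _ hζ0
        · exact one_ne_zero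
      exact h (diagUnit _ hd) (Subgroup.subset_closure ⟨i, hi, rfl⟩)
    · intro h u hu
      have hle : Ggrp N b ζ ≤ fixSub N p := by
        rw [Ggrp, Subgroup.closure_le]
        rintro v ⟨i, hi, hv⟩
        show matAct N (v : Matrix (Fin (N+1)) (Fin (N+1)) ℂ) p = p
        rw [hv]
        exact h i hi
      exact hle hu
  have fixexp : ∀ (p : MvPolynomial (Fin (N+1)) ℂ),
      (∀ i ≤ N, matAct N (eMat N b ζ i) p = p) ↔
      ∀ a ∈ p.support, InvExpR N b (resN N a) := by
    intro p
    have h1 : ∀ i : ℕ, matAct N (eMat N b ζ i) p = p ↔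
        ∀ a ∈ p.support, ((Finset.range N).lcm b) ∣
          ∑ t ∈ Finset.range (N+1),
            if t ≤ i then (Finset.range N).lcm b / Mf b t * b i * resN N a t else 0 := by
      intro i
      rw [show eMat N b ζ i = Matrix.diagonal (fun j : Fin (N+1) =>
        if (j:ℕ) ≤ i then ζ ^ ((Finset.range N).lcm b / Mf b (j:ℕ) * b i) else 1) from rfl,
        diag_fix_iff]
      apply forall₂_congr
      intro a ha
      rw [prod_emat, hζ.pow_eq_one_iff_dvd]
    constructor
    · intro h a ha i hi
      exact (h1 i).mp (h i hi) a ha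
    · intro h i hi
      exact (h1 i).mpr (fun a ha => h a ha i hi)
  refine ⟨?_, Set.Finite.subset (rootsDiag_finite (N+1) _ hMne) hGle,
    fun u hu v hv => rootsDiag_comm (N+1) _ hMne (hGle hu) (hGle hv)⟩
  ext p
  rw [Set.mem_setOf_eq, fixgen p, fixexp p, SetLike.mem_coe]
  constructor
  · intro hp
    rw [show p = ∑ v ∈ p.support, monomial v (coeff v p) from
      p.support_sum_monomial_coeff.symm]
    apply Submodule.sum_mem
    intro a ha
    obtain ⟨r, π, hpath, hfl⟩ := path_of_invExpR N b hN hb hbN (resN N a) (hp a ha)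
    have hexp : (Finsupp.equivFunOnFinite.symm
        fun i : Fin (N+1) => ⌊(Mf b i : ℚ) * π i⌋₊) = a := by
      ext i
      simp only [Finsupp.coe_equivFunOnFinite_symm]
      rw [hfl i (Nat.lt_succ_iff.mp i.isLt), Nat.floor_natCast]
      simp only [resN, dif_pos i.isLt, Fin.eta]
    have hx : (monomial a (coeff a p) : MvPolynomial (Fin (N+1)) ℂ)
        = coeff a p • xpow N b π := by
      rw [xpow, hexp, smul_monomial, smul_eq_mul, mul_one]
    rw [hx]
    exact Submodule.smul_mem _ _ (Submodule.subset_span ⟨r, π, hpath, rfl⟩)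
  · intro hp
    have hle : discreteLS N b ≤ invMod N b ζ := by
      rw [discreteLS, Submodule.span_le]
      rintro q ⟨r, π, hpath, rfl⟩
      intro i hi
      rw [show eMat N b ζ i = Matrix.diagonal (fun j : Fin (N+1) =>
        if (j:ℕ) ≤ i then ζ ^ ((Finset.range N).lcm b / Mf b (j:ℕ) * b i) else 1) from rfl,
        diag_fix_iff]
      intro a ha
      have haeq : a = (Finsupp.equivFunOnFinite.symm
          fun i : Fin (N+1) => ⌊(Mf b i : ℚ) * π i⌋₊) := by
        rw [xpow] at ha
        simpa [MvPolynomial.support_monomial] using ha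
      subst haeq
      rw [prod_emat, hζ.pow_eq_one_iff_dvd]
      have ha' : ∀ t ≤ N, (Mf b t : ℚ) * π t = ((resN N (Finsupp.equivFunOnFinite.symm
          fun i : Fin (N+1) => ⌊(Mf b i : ℚ) * π i⌋₊) t : ℕ) : ℚ) := by
        intro t ht
        obtain ⟨m, hm⟩ := path_exp_nat N b hN hb hbN hpath ht
        simp only [resN, dif_pos (show t < N+1 by omega),
          Finsupp.coe_equivFunOnFinite_symm]
        rw [hm, Nat.floor_natCast]
      exact invExpR_of_path N b hN hbN hpath _ ha' i hi
    exact (fixexp p).mp (fun i hi => hle hp i hi)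
end

section
/- Every element of G has determinant 1 (i.e., G ⊆ SL_{N+1}(ℂ)) if and only if the function π : {0,…,N} → ℚ defined by π(i) = 1/M_i is an LS-path over (S, ≤, b), i.e., if and only if b_j·(1/M_0 + 1/M_1 + ⋯ + 1/M_j) ∈ ℤ for all 0 ≤ j ≤ N−1 and 1/M_0 + 1/M_1 + ⋯ + 1/M_N ∈ ℤ. -/
open Finset MvPolynomial

/-!
`e_i` is diagonal, so `det e_i = ζ ^ (b_i · ∑_{j ≤ i} M / M_j)`, and as `ζ` has order `M` this is `1`
exactly when `b_i · ∑_{j ≤ i} 1/M_j ∈ ℤ`. Since `det` is multiplicative, `G ⊆ SL_{N+1}` iff every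
generator has determinant `1`; for `i = N` the condition reads `∑_{j ≤ N} 1/M_j ∈ ℤ` because `b_N = 1`,
and this integer is the degree of the LS-path.
-/

lemma forall_mem_closure_det_eq_one_iff {n R : Type*} [Fintype n] [DecidableEq n] [CommRing R]
    {S : Set (Matrix n n R)ˣ} :
    (∀ u ∈ Subgroup.closure S, (u : Matrix n n R).det = 1) ↔
      ∀ u ∈ S, (u : Matrix n n R).det = 1 :=
  Subgroup.closure_le (K := (Matrix.detMonoidHom.comp (Units.coeHom (Matrix n n R))).ker)

lemma det_diagonal_ite_pow {R : Type*} [CommRing R] {N i : ℕ} (hi : i ≤ N) (ζ : R) (e : ℕ → ℕ) :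
    (Matrix.diagonal fun j : Fin (N + 1) => if (j : ℕ) ≤ i then ζ ^ e j else 1).det =
      ζ ^ ∑ j ∈ range (i + 1), e j := by
  rw [Matrix.det_diagonal, Fin.prod_univ_eq_prod_range (fun j => if j ≤ i then ζ ^ e j else 1),
    prod_ite, prod_const_one, mul_one, prod_pow_eq_pow_sum]
  congr 2
  ext j
  simp only [mem_filter, mem_range]
  omega

lemma dvd_sum_div_mul_iff {M c : ℕ} {s : Finset ℕ} {d : ℕ → ℕ} (hM : 0 < M)
    (hd : ∀ j ∈ s, d j ∣ M) :
    M ∣ ∑ j ∈ s, M / d j * c ↔ ∃ k : ℤ, (c : ℚ) * ∑ j ∈ s, 1 / (d j : ℚ) = k := by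
  have hM0 : (M : ℚ) ≠ 0 := by exact_mod_cast hM.ne'
  have hcast : ((∑ j ∈ s, M / d j * c : ℕ) : ℚ) = M * ((c : ℚ) * ∑ j ∈ s, 1 / (d j : ℚ)) := by
    push_cast [mul_sum]
    refine sum_congr rfl fun j hj => ?_
    have hdj : (d j : ℚ) ≠ 0 := by exact_mod_cast (Nat.pos_of_dvd_of_pos (hd j hj) hM).ne'
    rw [Nat.cast_div (hd j hj) hdj]
    field_simp
  calc M ∣ ∑ j ∈ s, M / d j * c
      ↔ ∃ k : ℤ, ((∑ j ∈ s, M / d j * c : ℕ) : ℤ) = M * k := Int.natCast_dvd_natCast.symm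
    _ ↔ ∃ k : ℤ, ((∑ j ∈ s, M / d j * c : ℕ) : ℚ) = M * k :=
        exists_congr fun k => by rw [← Int.cast_inj (α := ℚ)]; push_cast; rfl
    _ ↔ ∃ k : ℤ, (c : ℚ) * ∑ j ∈ s, 1 / (d j : ℚ) = k :=
        exists_congr fun k => by rw [hcast, mul_right_inj' hM0]

lemma lcm_range_pos {N : ℕ} {b : ℕ → ℕ} (hb : ∀ i < N, 0 < b i) : 0 < (range N).lcm b := by
  refine Nat.pos_of_ne_zero fun h => ?_
  obtain ⟨i, hi, hbi⟩ := lcm_eq_zero_iff.mp h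
  exact (hb i (mem_range.mp hi)).ne' hbi

lemma Mf_dvd_lcm {N : ℕ} {b : ℕ → ℕ} (hbN : b N = 1) {i : ℕ} (hi : i ≤ N) :
    Mf b i ∣ (range N).lcm b := by
  refine Nat.lcm_dvd ?_ ?_
  · split_ifs
    · exact one_dvd _
    · exact dvd_lcm (mem_range.mpr (by omega))
  · rcases hi.lt_or_eq with hi | rfl
    · exact dvd_lcm (mem_range.mpr hi)
    · rw [hbN]
      exact one_dvd _

lemma det_eMat {N i : ℕ} (hi : i ≤ N) (b : ℕ → ℕ) (ζ : ℂ) :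
    (eMat N b ζ i).det = ζ ^ ∑ j ∈ range (i + 1), (range N).lcm b / Mf b j * b i :=
  det_diagonal_ite_pow hi ζ fun j => (range N).lcm b / Mf b j * b i

lemma isUnit_eMat {ζ : ℂ} (hζ : ζ ≠ 0) (N : ℕ) (b : ℕ → ℕ) (i : ℕ) : IsUnit (eMat N b ζ i) := by
  rw [eMat, Matrix.isUnit_diagonal, Pi.isUnit_iff]
  intro j
  split_ifs
  exacts [hζ.isUnit.pow _, isUnit_one]

lemma forall_mem_Ggrp_det_eq_one_iff {ζ : ℂ} (hζ : ζ ≠ 0) (N : ℕ) (b : ℕ → ℕ) :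
    (∀ u ∈ Ggrp N b ζ, (u : Matrix (Fin (N + 1)) (Fin (N + 1)) ℂ).det = 1) ↔
      ∀ i ≤ N, (eMat N b ζ i).det = 1 := by
  rw [Ggrp, forall_mem_closure_det_eq_one_iff]
  constructor
  · intro h i hi
    simpa using h (isUnit_eMat hζ N b i).unit ⟨i, hi, rfl⟩
  · rintro h u ⟨i, hi, hu⟩
    rw [hu]
    exact h i hi

lemma exists_isLSPath_iff {N : ℕ} {b : ℕ → ℕ} (hbN : b N = 1) {π : ℕ → ℚ}
    (hπ : ∀ i, 0 ≤ π i) (hπN : ∀ i, N < i → π i = 0) :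
    (∃ r, IsLSPath N b r π) ↔ ∀ i ≤ N, ∃ k : ℤ, (b i : ℚ) * ∑ j ∈ range (i + 1), π j = k := by
  constructor
  · rintro ⟨r, -, -, hint, hsum⟩ i hi
    rcases hi.lt_or_eq with hi | rfl
    · exact hint i hi
    · exact ⟨r, by rw [hbN, Nat.cast_one, one_mul, hsum, Int.cast_natCast]⟩
  · intro h
    obtain ⟨k, hk⟩ := h N le_rfl
    rw [hbN, Nat.cast_one, one_mul] at hk
    have hk0 : 0 ≤ k := by exact_mod_cast hk ▸ sum_nonneg fun j _ => hπ j
    refine ⟨k.toNat, hπ, hπN, fun i hi => h i hi.le, ?_⟩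
    rw [hk, ← Int.cast_natCast, Int.toNat_of_nonneg hk0]

theorem stmt15_general (N : ℕ) (b : ℕ → ℕ) (hb : ∀ i < N, 0 < b i) (hbN : b N = 1)
    (ζ : ℂ) (hζ : IsPrimitiveRoot ζ ((Finset.range N).lcm b)) :
    (∀ u ∈ Ggrp N b ζ, (u : Matrix (Fin (N + 1)) (Fin (N + 1)) ℂ).det = 1) ↔
      ∃ r : ℕ, IsLSPath N b r (fun i => if i ≤ N then (1 : ℚ) / (Mf b i : ℚ) else 0) := by
  have hM := lcm_range_pos hb
  have hsum : ∀ i ≤ N, ∑ j ∈ range (i + 1), (if j ≤ N then (1 : ℚ) / (Mf b j : ℚ) else 0) =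
      ∑ j ∈ range (i + 1), 1 / (Mf b j : ℚ) :=
    fun i hi => sum_congr rfl fun j hj => if_pos (by rw [mem_range] at hj; omega)
  rw [forall_mem_Ggrp_det_eq_one_iff (hζ.ne_zero hM.ne'),
    exists_isLSPath_iff hbN (fun i => by positivity) (fun i hi => if_neg hi.not_ge)]
  refine forall₂_congr fun i hi => ?_
  rw [det_eMat hi, hζ.pow_eq_one_iff_dvd, hsum i hi,
    dvd_sum_div_mul_iff hM fun j hj => Mf_dvd_lcm hbN (by rw [mem_range] at hj; omega)]

/-- Every element of `G` has determinant `1` (i.e. `G ⊆ SL_{N+1}(ℂ)`) if and only if the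
function `i ↦ 1/M_i` on `{0,…,N}` is an LS-path over `(S, ≤, b)`, i.e. iff
`b_j·(1/M_0 + ⋯ + 1/M_j) ∈ ℤ` for all `0 ≤ j ≤ N-1` and `1/M_0 + ⋯ + 1/M_N ∈ ℤ`. -/
theorem stmt15 (N : ℕ) (hN : 1 ≤ N) (b : ℕ → ℕ) (hb : ∀ i < N, 0 < b i) (hbN : b N = 1)
    (ζ : ℂ) (hζ : IsPrimitiveRoot ζ ((Finset.range N).lcm b)) :
    (∀ u ∈ Ggrp N b ζ, (u : Matrix (Fin (N + 1)) (Fin (N + 1)) ℂ).det = 1) ↔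
      ∃ r : ℕ, IsLSPath N b r (fun i => if i ≤ N then (1 : ℚ) / (Mf b i : ℚ) else 0) :=
  stmt15_general N b hb hbN ζ hζ
end
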